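/- arXiv:2503.21963 — 7 statements merged into one kernel-verified Lean document; each statement's English description precedes it below -/
import Mathlib

section
/- Let η, α, h_p, d_z, r_p, K be positive reals with C_P = ηα/d_z > 1 and C_Z = K C_P/(h_p+K) > 1, and set P* = d_z h_p/(ηα − d_z), Z* = (r_p/α)(1 − P*/K)(h_p + P*), and K^c = h_p(ηα + d_z)/(ηα − d_z). For the map f(Z,P) = (ηαPZ/(h_p+P) − d_z Z, r_p P(1 − P/K) − αPZ/(h_p+P)), the trace of the Jacobian matrix of f at the coexistence equilibrium (Z*, P*) equals r_p P*(K − K^c)/(K(h_p + P*)); in particular, K^c = h_p + 2P*, and the trace is negative if K < K^c, zero if K = K^c, and positive if K > K^c. -/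
/-!
At the coexistence equilibrium the zooplankton's numerical response `ηαP*/(h_p + P*)` balances
its death rate `d_z`, so the `Z`-diagonal entry of the Jacobian vanishes and the trace is the
`P`-diagonal entry alone. Substituting `Z*` into `∂f₂/∂P = r_p (1 - 2P/K) - α Z h_p/(h_p + P)²`
gives `r_p P* (K - h_p - 2P*)/(K (h_p + P*))`, and `h_p + 2P* = h_p(ηα + d_z)/(ηα - d_z)`.
-/

lemma deriv_mul_div_sub_mul (c h P d Z₀ : ℝ) :
    deriv (fun Z => c * P * Z / (h + P) - d * Z) Z₀ = c * P / (h + P) - d := by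
  have hlin : (fun Z => c * P * Z / (h + P) - d * Z) = fun Z => Z * (c * P / (h + P) - d) := by
    funext Z; ring
  rw [hlin]
  exact (hasDerivAt_mul_const _).deriv

lemma hasDerivAt_mul_div_add {h x : ℝ} (c : ℝ) (hx : h + x ≠ 0) :
    HasDerivAt (fun x => c * x / (h + x)) (c * h / (h + x) ^ 2) x := by
  have hnum : HasDerivAt (fun x => c * x) c x := by
    simpa using (hasDerivAt_id x).const_mul c
  have hden : HasDerivAt (fun x => h + x) 1 x := (hasDerivAt_id x).const_add h
  exact (hnum.fun_div hden hx).congr_deriv (by ring)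

lemma hasDerivAt_logistic_sub_holling {α h r K Z P : ℝ} (hP : h + P ≠ 0) :
    HasDerivAt (fun P => r * P * (1 - P / K) - α * P * Z / (h + P))
      (r * (1 - 2 * P / K) - α * Z * h / (h + P) ^ 2) P := by
  have hlogistic : HasDerivAt (fun P => r * P - r / K * P ^ 2) (r - r / K * (2 * P)) P := by
    simpa using ((hasDerivAt_id P).const_mul r).fun_sub ((hasDerivAt_pow 2 P).const_mul (r / K))
  have hsplit : (fun P => r * P * (1 - P / K) - α * P * Z / (h + P))
      = fun P => (r * P - r / K * P ^ 2) - α * Z * P / (h + P) := by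
    funext P; ring
  rw [hsplit]
  exact (hlogistic.fun_sub (hasDerivAt_mul_div_add (α * Z) hP)).congr_deriv (by ring)

lemma numerical_response_eq_death {e h d P : ℝ} (he : e ≠ 0) (hh : h ≠ 0) (hed : e - d ≠ 0)
    (hP : P = d * h / (e - d)) : e * P / (h + P) = d := by
  have hsum : h + P = h * e / (e - d) := by rw [hP]; field_simp; ring
  rw [hsum, hP]
  field_simp

lemma critical_capacity_eq {e h d : ℝ} (hed : e - d ≠ 0) :
    h * (e + d) / (e - d) = h + 2 * (d * h / (e - d)) := by
  field_simp
  ring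

lemma deriv_prey_at_equilibrium {α h r K P₀ : ℝ} (hα : α ≠ 0) (hK : K ≠ 0) (hP₀ : h + P₀ ≠ 0) :
    deriv (fun P => r * P * (1 - P / K) - α * P * ((r / α) * (1 - P₀ / K) * (h + P₀)) / (h + P))
      P₀ = r * P₀ * (K - (h + 2 * P₀)) / (K * (h + P₀)) := by
  rw [hasDerivAt_logistic_sub_holling hP₀ |>.deriv]
  field_simp
  ring

theorem coexistence_jacobian_trace_general
    (η α h_p d_z r_p K : ℝ)
    (hα : 0 < α) (hhp : 0 < h_p) (hdz : 0 < d_z)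
    (hrp : 0 < r_p) (hK : 0 < K)
    (hCP : η * α / d_z > 1)
    (Pstar Zstar Kc : ℝ)
    (hP : Pstar = d_z * h_p / (η * α - d_z))
    (hZ : Zstar = (r_p / α) * (1 - Pstar / K) * (h_p + Pstar))
    (hKc : Kc = h_p * (η * α + d_z) / (η * α - d_z))
    (f₁ f₂ : ℝ → ℝ → ℝ)
    (hf₁ : f₁ = fun Z P => η * α * P * Z / (h_p + P) - d_z * Z)
    (hf₂ : f₂ = fun Z P => r_p * P * (1 - P / K) - α * P * Z / (h_p + P))
    (J : Matrix (Fin 2) (Fin 2) ℝ)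
    (hJ : J = !![deriv (fun Z => f₁ Z Pstar) Zstar, deriv (fun P => f₁ Zstar P) Pstar;
                 deriv (fun Z => f₂ Z Pstar) Zstar, deriv (fun P => f₂ Zstar P) Pstar]) :
    J.trace = r_p * Pstar * (K - Kc) / (K * (h_p + Pstar)) ∧
    Kc = h_p + 2 * Pstar ∧
    (K < Kc → J.trace < 0) ∧
    (K = Kc → J.trace = 0) ∧
    (K > Kc → J.trace > 0) := by
  have hdz_lt : d_z < η * α := (one_lt_div hdz).mp hCP
  have hPpos : 0 < Pstar := hP ▸ div_pos (mul_pos hdz hhp) (sub_pos.mpr hdz_lt)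
  have hKc' : Kc = h_p + 2 * Pstar := by rw [hKc, hP, critical_capacity_eq (by linarith)]
  have htrace : J.trace = r_p * Pstar * (K - Kc) / (K * (h_p + Pstar)) := by
    have hbalance : η * α * Pstar / (h_p + Pstar) = d_z :=
      numerical_response_eq_death (by linarith) hhp.ne' (by linarith) hP
    subst hJ hf₁ hf₂ hZ
    beta_reduce
    rw [Matrix.trace_fin_two_of, deriv_mul_div_sub_mul, hbalance, sub_self, zero_add,
      deriv_prey_at_equilibrium hα.ne' hK.ne' (by linarith), hKc']
  have hcoeff : 0 < r_p * Pstar / (K * (h_p + Pstar)) := by positivity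
  have htrace' : J.trace = r_p * Pstar / (K * (h_p + Pstar)) * (K - Kc) := by
    rw [htrace]; ring
  refine ⟨htrace, hKc', fun h => ?_, fun h => ?_, fun h => ?_⟩
  · rw [htrace']; exact mul_neg_of_pos_of_neg hcoeff (sub_neg.mpr h)
  · rw [htrace', h, sub_self, mul_zero]
  · rw [htrace']; exact mul_pos hcoeff (sub_pos.mpr h)

/-- The trace of the Jacobian of the plankton vector field at the coexistence
equilibrium `(Z*, P*)` equals `r_p P*(K − K^c)/(K(h_p + P*))`, where
`K^c = h_p(ηα + d_z)/(ηα − d_z) = h_p + 2P*`; its sign is determined by the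
comparison of `K` with `K^c`. -/
theorem coexistence_jacobian_trace
    (η α h_p d_z r_p K : ℝ)
    (hη : 0 < η) (hα : 0 < α) (hhp : 0 < h_p) (hdz : 0 < d_z)
    (hrp : 0 < r_p) (hK : 0 < K)
    (hCP : η * α / d_z > 1)
    (hCZ : K * (η * α / d_z) / (h_p + K) > 1)
    (Pstar Zstar Kc : ℝ)
    (hP : Pstar = d_z * h_p / (η * α - d_z))
    (hZ : Zstar = (r_p / α) * (1 - Pstar / K) * (h_p + Pstar))
    (hKc : Kc = h_p * (η * α + d_z) / (η * α - d_z))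
    (f₁ f₂ : ℝ → ℝ → ℝ)
    (hf₁ : f₁ = fun Z P => η * α * P * Z / (h_p + P) - d_z * Z)
    (hf₂ : f₂ = fun Z P => r_p * P * (1 - P / K) - α * P * Z / (h_p + P))
    (J : Matrix (Fin 2) (Fin 2) ℝ)
    (hJ : J = !![deriv (fun Z => f₁ Z Pstar) Zstar, deriv (fun P => f₁ Zstar P) Pstar;
                 deriv (fun Z => f₂ Z Pstar) Zstar, deriv (fun P => f₂ Zstar P) Pstar]) :
    J.trace = r_p * Pstar * (K - Kc) / (K * (h_p + Pstar)) ∧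
    Kc = h_p + 2 * Pstar ∧
    (K < Kc → J.trace < 0) ∧
    (K = Kc → J.trace = 0) ∧
    (K > Kc → J.trace > 0) :=
  coexistence_jacobian_trace_general η α h_p d_z r_p K hα hhp hdz hrp hK hCP Pstar Zstar Kc hP hZ
    hKc f₁ f₂ hf₁ hf₂ J hJ
end

section
/- Let ξ, N0, γ, δ, d_b, d_z, c, h_b, h_z, h_m, β, Z* be positive reals. Viewing β_z^{c1}(σ) = ((d_b + cσZ*/h_m)(γ+δ)/(ξN0) − β/h_b)·(h_m h_z d_z)/(σZ*) as a function of σ > 0, its derivative with respect to σ equals (h_m h_z d_z)/(h_b σ² Z*) · ((γ+δ) h_b d_b/(ξ N0)) · (R0^out − 1), where R0^out = (ξ N0 β)/(d_b(γ+δ) h_b). Consequently β_z^{c1} is strictly decreasing in σ if R0^out < 1 and strictly increasing in σ if R0^out > 1. -/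
/-!
Clearing the factor `σ Z*`, the critical rate is a linear-fractional function
`σ ↦ (p + q σ) / σ = p / σ + q` of `σ`, whose numerator constant is
`p = (γ+δ) d_b h_m h_z d_z / (ξ N0 Z*) · (1 - R0^out)`.
Its derivative is `-p / σ²`, so its monotonicity on `σ > 0` is decided by the sign of `1 - R0^out`.
-/

open Set

theorem hasDerivAt_affine_div_self (p q : ℝ) {x : ℝ} (hx : x ≠ 0) :
    HasDerivAt (fun x => (p + q * x) / x) (-p / x ^ 2) x := by
  have hnum : HasDerivAt (fun x => p + q * x) q x := by
    simpa using ((hasDerivAt_id x).const_mul q).const_add p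
  refine (hnum.div (hasDerivAt_id' x) hx).congr_deriv ?_
  ring

theorem affine_div_self_eq (p q : ℝ) {x : ℝ} (hx : x ≠ 0) : (p + q * x) / x = p / x + q := by
  rw [add_div, mul_div_cancel_right₀ q hx]

theorem strictAntiOn_affine_div_self {p : ℝ} (q : ℝ) (hp : 0 < p) :
    StrictAntiOn (fun x => (p + q * x) / x) (Ioi 0) := by
  intro x hx y hy hxy
  simp only [affine_div_self_eq p q (ne_of_gt hx), affine_div_self_eq p q (ne_of_gt hy)]
  gcongr

theorem strictMonoOn_affine_div_self {p : ℝ} (q : ℝ) (hp : p < 0) :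
    StrictMonoOn (fun x => (p + q * x) / x) (Ioi 0) := by
  intro x hx y hy hxy
  simp only [affine_div_self_eq p q (ne_of_gt hx), affine_div_self_eq p q (ne_of_gt hy)]
  have : -p / y < -p / x := div_lt_div_of_pos_left (neg_pos.mpr hp) hx hxy
  rw [neg_div, neg_div] at this
  linarith

theorem critical_betaz_monotone_in_sigma_general
    (ξ N0 γ δ d_b d_z c h_b h_z h_m β Zs : ℝ)
    (hξ : 0 < ξ) (hN0 : 0 < N0) (hγ : 0 < γ) (hδ : 0 < δ)
    (hdb : 0 < d_b) (hdz : 0 < d_z)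
    (hhb : 0 < h_b) (hhz : 0 < h_z) (hhm : 0 < h_m) (hZs : 0 < Zs)
    (f : ℝ → ℝ) (R0 : ℝ)
    (hf : f = fun σ => ((d_b + c * σ * Zs / h_m) * (γ + δ) / (ξ * N0) - β / h_b) *
        (h_m * h_z * d_z) / (σ * Zs))
    (hR0 : R0 = ξ * N0 * β / (d_b * (γ + δ) * h_b)) :
    (∀ σ > (0 : ℝ), deriv f σ =
        h_m * h_z * d_z / (h_b * σ ^ 2 * Zs) * ((γ + δ) * h_b * d_b / (ξ * N0)) * (R0 - 1)) ∧
    (R0 < 1 → StrictAntiOn f (Set.Ioi 0)) ∧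
    (R0 > 1 → StrictMonoOn f (Set.Ioi 0)) := by
  set C := (γ + δ) * d_b * (h_m * h_z * d_z) / (ξ * N0 * Zs) with hC_def
  set q := c * (γ + δ) * h_z * d_z / (ξ * N0) with hq_def
  have hC : 0 < C := by positivity
  have hf_affine : f = fun σ => (C * (1 - R0) + q * σ) / σ := by
    rw [hf, hR0, hC_def, hq_def]
    funext σ
    rw [mul_comm σ Zs, ← div_div]
    congr 1
    field_simp
    ring
  refine ⟨fun σ hσ => ?_, fun hR => ?_, fun hR => ?_⟩
  · rw [hf_affine, (hasDerivAt_affine_div_self _ q hσ.ne').deriv, hC_def]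
    field_simp
    ring
  · rw [hf_affine]
    exact strictAntiOn_affine_div_self q (mul_pos hC (by linarith))
  · rw [hf_affine]
    exact strictMonoOn_affine_div_self q (mul_neg_of_pos_of_neg hC (by linarith))

/-- The derivative of `β_z^{c1}` with respect to the association rate `σ`
equals `(h_m h_z d_z)/(h_b σ² Z*)·((γ+δ)h_b d_b/(ξ N0))·(R0^out − 1)`; hence
`β_z^{c1}` is strictly decreasing in `σ` when `R0^out < 1` and strictly
increasing when `R0^out > 1`. -/
theorem critical_betaz_monotone_in_sigma
    (ξ N0 γ δ d_b d_z c h_b h_z h_m β Zs : ℝ)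
    (hξ : 0 < ξ) (hN0 : 0 < N0) (hγ : 0 < γ) (hδ : 0 < δ)
    (hdb : 0 < d_b) (hdz : 0 < d_z) (hc : 0 < c)
    (hhb : 0 < h_b) (hhz : 0 < h_z) (hhm : 0 < h_m) (hβ : 0 < β) (hZs : 0 < Zs)
    (f : ℝ → ℝ) (R0 : ℝ)
    (hf : f = fun σ => ((d_b + c * σ * Zs / h_m) * (γ + δ) / (ξ * N0) - β / h_b) *
        (h_m * h_z * d_z) / (σ * Zs))
    (hR0 : R0 = ξ * N0 * β / (d_b * (γ + δ) * h_b)) :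
    (∀ σ > (0 : ℝ), deriv f σ =
        h_m * h_z * d_z / (h_b * σ ^ 2 * Zs) * ((γ + δ) * h_b * d_b / (ξ * N0)) * (R0 - 1)) ∧
    (R0 < 1 → StrictAntiOn f (Set.Ioi 0)) ∧
    (R0 > 1 → StrictMonoOn f (Set.Ioi 0)) :=
  critical_betaz_monotone_in_sigma_general ξ N0 γ δ d_b d_z c h_b h_z h_m β Zs hξ hN0 hγ hδ hdb hdz
    hhb hhz hhm hZs f R0 hf hR0
end

section
/- Let ξ, N0, γ, δ, d_b, d_z, c, h_b, h_z, h_m, β, β_z, Z* be positive reals. Viewing R0_BZ^out(σ) = (ξ N0)/((γ+δ)(d_b + cσZ*/h_m)) · (β/h_b + β_z σ Z*/(h_z d_z h_m)) as a function of σ > 0, its derivative with respect to σ equals (ξ N0/(γ+δ)) · (Z*/h_m)/(d_b + cσZ*/h_m)² · (d_b/(h_z d_z)) · (β_z − β_z^{c2}), where β_z^{c2} = (c h_z d_z)/(h_b d_b)·β. Consequently R0_BZ^out is strictly increasing in σ if β_z > β_z^{c2}, constant in σ if β_z = β_z^{c2}, and strictly decreasing in σ if β_z < β_z^{c2}. 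-/
/-!
As a function of `σ`, `R0_BZ^out` is a linear fractional map `(A + Bσ)/(P + Qσ)` with
`P, Q > 0`. Two of its values differ by `(BP - AQ)(σ₂ - σ₁)/((P + Qσ₁)(P + Qσ₂))` and
its derivative is `(BP - AQ)/(P + Qσ)²`, so everything is governed by the sign of the
determinant `BP - AQ`, which is a positive multiple of `β_z - β_z^{c2}`.
-/

noncomputable def linFrac (a b p q x : ℝ) : ℝ := (a + b * x) / (p + q * x)

section LinFrac

variable {a b p q : ℝ}

theorem linFrac_sub_linFrac {x y : ℝ} (hx : p + q * x ≠ 0) (hy : p + q * y ≠ 0) :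
    linFrac a b p q y - linFrac a b p q x =
      (b * p - a * q) * (y - x) / ((p + q * x) * (p + q * y)) := by
  rw [linFrac, linFrac, div_sub_div _ _ hy hx, mul_comm (p + q * y)]
  ring

theorem hasDerivAt_linFrac {x : ℝ} (hx : p + q * x ≠ 0) :
    HasDerivAt (linFrac a b p q) ((b * p - a * q) / (p + q * x) ^ 2) x := by
  have hnum : HasDerivAt (fun x => a + b * x) b x := by
    simpa using ((hasDerivAt_id x).const_mul b).const_add a
  have hden : HasDerivAt (fun x => p + q * x) q x := by
    simpa using ((hasDerivAt_id x).const_mul q).const_add p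
  exact (hnum.div hden hx).congr_deriv (by ring)

variable {s : Set ℝ}

theorem strictMonoOn_linFrac (hs : ∀ x ∈ s, 0 < p + q * x) (hdet : 0 < b * p - a * q) :
    StrictMonoOn (linFrac a b p q) s := by
  intro x hx y hy hxy
  rw [← sub_pos, linFrac_sub_linFrac (hs x hx).ne' (hs y hy).ne']
  exact div_pos (mul_pos hdet (sub_pos.2 hxy)) (mul_pos (hs x hx) (hs y hy))

theorem strictAntiOn_linFrac (hs : ∀ x ∈ s, 0 < p + q * x) (hdet : b * p - a * q < 0) :
    StrictAntiOn (linFrac a b p q) s := by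
  intro x hx y hy hxy
  rw [← sub_neg, linFrac_sub_linFrac (hs x hx).ne' (hs y hy).ne']
  exact div_neg_of_neg_of_pos (mul_neg_of_neg_of_pos hdet (sub_pos.2 hxy))
    (mul_pos (hs x hx) (hs y hy))

theorem linFrac_eq_linFrac {x y : ℝ} (hx : p + q * x ≠ 0) (hy : p + q * y ≠ 0)
    (hdet : b * p - a * q = 0) : linFrac a b p q x = linFrac a b p q y := by
  rw [← sub_eq_zero, linFrac_sub_linFrac hy hx, hdet, zero_mul, zero_div]

end LinFrac

theorem R0BZ_monotone_in_sigma_general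
    (ξ N0 γ δ d_b d_z c h_b h_z h_m β β_z Zs : ℝ)
    (hξ : 0 < ξ) (hN0 : 0 < N0) (hγ : 0 < γ) (hδ : 0 < δ)
    (hdb : 0 < d_b) (hdz : 0 < d_z) (hc : 0 < c)
    (hhz : 0 < h_z) (hhm : 0 < h_m) (hZs : 0 < Zs)
    (f : ℝ → ℝ) (βzc2 : ℝ)
    (hf : f = fun σ => ξ * N0 / ((γ + δ) * (d_b + c * σ * Zs / h_m)) *
        (β / h_b + β_z * σ * Zs / (h_z * d_z * h_m)))
    (hc2 : βzc2 = c * h_z * d_z / (h_b * d_b) * β) :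
    (∀ σ > (0 : ℝ), deriv f σ =
        ξ * N0 / (γ + δ) * ((Zs / h_m) / (d_b + c * σ * Zs / h_m) ^ 2) *
          (d_b / (h_z * d_z)) * (β_z - βzc2)) ∧
    (β_z > βzc2 → StrictMonoOn f (Set.Ioi 0)) ∧
    (β_z = βzc2 → ∀ σ₁ ∈ Set.Ioi (0 : ℝ), ∀ σ₂ ∈ Set.Ioi (0 : ℝ), f σ₁ = f σ₂) ∧
    (β_z < βzc2 → StrictAntiOn f (Set.Ioi 0)) := by
  have hf' : f = linFrac (ξ * N0 / (γ + δ) * (β / h_b))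
      (ξ * N0 / (γ + δ) * (β_z * Zs / (h_z * d_z * h_m))) d_b (c * Zs / h_m) := by
    subst hf
    funext σ
    rw [linFrac, ← div_div]
    ring
  set K := ξ * N0 / (γ + δ) * (Zs / h_m) * (d_b / (h_z * d_z)) with hK_def
  have hK : 0 < K := by positivity
  have hdet : ξ * N0 / (γ + δ) * (β_z * Zs / (h_z * d_z * h_m)) * d_b -
      ξ * N0 / (γ + δ) * (β / h_b) * (c * Zs / h_m) = K * (β_z - βzc2) := by
    rw [hK_def, hc2]
    field_simp
  have hden : ∀ σ ∈ Set.Ioi (0 : ℝ), 0 < d_b + c * Zs / h_m * σ :=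
    fun σ (hσ : 0 < σ) => by positivity
  rw [hf']
  refine ⟨fun σ hσ => ?_, fun h => ?_, fun h σ₁ hσ₁ σ₂ hσ₂ => ?_, fun h => ?_⟩
  · rw [(hasDerivAt_linFrac (hden σ hσ).ne').deriv, hdet]
    ring
  · exact strictMonoOn_linFrac hden (by rw [hdet]; exact mul_pos hK (sub_pos.2 h))
  · exact linFrac_eq_linFrac (hden σ₁ hσ₁).ne' (hden σ₂ hσ₂).ne'
      (by rw [hdet, h, sub_self, mul_zero])
  · exact strictAntiOn_linFrac hden (by rw [hdet]; exact mul_neg_of_pos_of_neg hK (sub_neg.2 h))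

/-- The derivative of `R0_BZ^out` with respect to `σ` equals
`(ξN0/(γ+δ))·(Z*/h_m)/(d_b + cσZ*/h_m)²·(d_b/(h_z d_z))·(β_z − β_z^{c2})`;
hence `R0_BZ^out` is strictly increasing in `σ` when `β_z > β_z^{c2}`,
constant when `β_z = β_z^{c2}`, and strictly decreasing when `β_z < β_z^{c2}`. -/
theorem R0BZ_monotone_in_sigma
    (ξ N0 γ δ d_b d_z c h_b h_z h_m β β_z Zs : ℝ)
    (hξ : 0 < ξ) (hN0 : 0 < N0) (hγ : 0 < γ) (hδ : 0 < δ)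
    (hdb : 0 < d_b) (hdz : 0 < d_z) (hc : 0 < c)
    (hhb : 0 < h_b) (hhz : 0 < h_z) (hhm : 0 < h_m) (hβ : 0 < β)
    (hβz : 0 < β_z) (hZs : 0 < Zs)
    (f : ℝ → ℝ) (βzc2 : ℝ)
    (hf : f = fun σ => ξ * N0 / ((γ + δ) * (d_b + c * σ * Zs / h_m)) *
        (β / h_b + β_z * σ * Zs / (h_z * d_z * h_m)))
    (hc2 : βzc2 = c * h_z * d_z / (h_b * d_b) * β) :
    (∀ σ > (0 : ℝ), deriv f σ =
        ξ * N0 / (γ + δ) * ((Zs / h_m) / (d_b + c * σ * Zs / h_m) ^ 2) *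
          (d_b / (h_z * d_z)) * (β_z - βzc2)) ∧
    (β_z > βzc2 → StrictMonoOn f (Set.Ioi 0)) ∧
    (β_z = βzc2 → ∀ σ₁ ∈ Set.Ioi (0 : ℝ), ∀ σ₂ ∈ Set.Ioi (0 : ℝ), f σ₁ = f σ₂) ∧
    (β_z < βzc2 → StrictAntiOn f (Set.Ioi 0)) :=
  R0BZ_monotone_in_sigma_general ξ N0 γ δ d_b d_z c h_b h_z h_m β β_z Zs hξ hN0 hγ hδ hdb hdz hc hhz
    hhm hZs f βzc2 hf hc2
end

section
/- Let ξ, N0, γ, δ, d_b, d_z, c, σ, h_b, h_z, h_m, β, β_z, Z* be positive reals, set A = d_b + cσZ*/h_m, and define c_2 = A + γ + δ + d_z, c_1 = (A + d_z)(γ+δ) + A d_z − N0ξβ/h_b, c_0 = (γ+δ) A d_z − N0ξβ d_z/h_b − N0ξβ_z σZ*/(h_z h_m). If R0_BZ^out = (ξ N0)/((γ+δ)A) (β/h_b + β_z σ Z*/(h_z d_z h_m)) < 1, then c_2 > 0, c_1 > 0 and c_0 > 0, and consequently the cubic x³ + c_2 x² + c_1 x + c_0 has no nonnegative real root (every real root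 is strictly negative), so the initial epidemic growth rate is negative. -/
/-- If `R0_BZ^out < 1` then the coefficients `c_2, c_1, c_0` of the
characteristic cubic are all positive, so every real root of
`x³ + c_2x² + c_1x + c_0` is strictly negative: the initial epidemic growth
rate is negative. -/
theorem cubic_roots_negative_of_R0_lt_one
    (ξ N0 γ δ d_b d_z c σ h_b h_z h_m β β_z Zs : ℝ)
    (hξ : 0 < ξ) (hN0 : 0 < N0) (hγ : 0 < γ) (hδ : 0 < δ)
    (hdb : 0 < d_b) (hdz : 0 < d_z) (hc : 0 < c) (hσ : 0 < σ)
    (hhb : 0 < h_b) (hhz : 0 < h_z) (hhm : 0 < h_m) (hβ : 0 < β)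
    (hβz : 0 < β_z) (hZs : 0 < Zs)
    (A c0 c1 c2 : ℝ)
    (hA : A = d_b + c * σ * Zs / h_m)
    (hc2 : c2 = A + γ + δ + d_z)
    (hc1 : c1 = (A + d_z) * (γ + δ) + A * d_z - N0 * ξ * β / h_b)
    (hc0 : c0 = (γ + δ) * A * d_z - N0 * ξ * β * d_z / h_b -
        N0 * ξ * β_z * σ * Zs / (h_z * h_m))
    (hR : ξ * N0 / ((γ + δ) * A) * (β / h_b + β_z * σ * Zs / (h_z * d_z * h_m)) < 1) :
    0 < c2 ∧ 0 < c1 ∧ 0 < c0 ∧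
    ∀ x : ℝ, x ^ 3 + c2 * x ^ 2 + c1 * x + c0 = 0 → x < 0 := by
  have hA0 : 0 < A := by
    rw [hA]; positivity
  have hden : 0 < (γ + δ) * A := by positivity
  -- key inequality from hR
  have hkey : ξ * N0 * (β / h_b + β_z * σ * Zs / (h_z * d_z * h_m)) < (γ + δ) * A := by
    calc ξ * N0 * (β / h_b + β_z * σ * Zs / (h_z * d_z * h_m))
        = ξ * N0 / ((γ + δ) * A) * (β / h_b + β_z * σ * Zs / (h_z * d_z * h_m)) * ((γ + δ) * A) := by
          field_simp
      _ < 1 * ((γ + δ) * A) := mul_lt_mul_of_pos_right hR hden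
      _ = (γ + δ) * A := one_mul _
  have h1 : 0 < β / h_b := by positivity
  have h2 : 0 < β_z * σ * Zs / (h_z * d_z * h_m) := by positivity
  have hb1 : ξ * N0 * (β / h_b) < (γ + δ) * A := by
    linarith [mul_pos (mul_pos hξ hN0) h2, hkey]
  have hc0' : 0 < c0 := by
    rw [hc0]
    have e1 : N0 * ξ * β * d_z / h_b = ξ * N0 * (β / h_b) * d_z := by ring
    have e2 : N0 * ξ * β_z * σ * Zs / (h_z * h_m) =
        ξ * N0 * (β_z * σ * Zs / (h_z * d_z * h_m)) * d_z := by
      field_simp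
    rw [e1, e2]
    linarith [mul_lt_mul_of_pos_right hkey hdz]
  refine ⟨by rw [hc2]; positivity, ?_, hc0', ?_⟩
  · rw [hc1]
    have e1 : N0 * ξ * β / h_b = ξ * N0 * (β / h_b) := by ring
    rw [e1]
    linarith [hb1, mul_pos hA0 hdz, mul_pos hdz hγ, mul_pos hdz hδ]
  · intro x hx
    by_contra h
    push_neg at h
    have hc2' : 0 < c2 := by rw [hc2]; positivity
    have hc1' : 0 < c1 := by
      rw [hc1]
      have e1 : N0 * ξ * β / h_b = ξ * N0 * (β / h_b) := by ring
      rw [e1]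
      linarith [hb1, mul_pos hA0 hdz, mul_pos hdz hγ, mul_pos hdz hδ]
    linarith [pow_nonneg h 3, mul_nonneg hc2'.le (pow_nonneg h 2), mul_nonneg hc1'.le h]
end

section
/- Let ξ, N0, γ, δ, d_b, d_z, c, σ, h_b, h_z, h_m, β, β_z, Z* be positive reals, set A = d_b + cσZ*/h_m, and define c_2 = A + γ + δ + d_z, c_1 = (A + d_z)(γ+δ) + A d_z − N0ξβ/h_b, c_0 = (γ+δ) A d_z − N0ξβ d_z/h_b − N0ξβ_z σZ*/(h_z h_m). If R0_BZ^out = (ξ N0)/((γ+δ)A) (β/h_b + β_z σ Z*/(h_z d_z h_m)) > 1, then c_0 < 0 and the cubic x³ + c_2 x² + c_1 x + c_0 has at least one strictly positive real root; i.e., the initial epidemic growth rate is positive and the disease can invade the population. -/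
private lemma cubic_eval_large (c2 c1 c0 : ℝ) :
    0 < (1 + |c2| + |c1| + |c0|) ^ 3 + c2 * (1 + |c2| + |c1| + |c0|) ^ 2 +
      c1 * (1 + |c2| + |c1| + |c0|) + c0 := by
  set a := |c2|; set b := |c1|; set d := |c0|
  have ha : 0 ≤ a := abs_nonneg c2
  have hb : 0 ≤ b := abs_nonneg c1
  have hd : 0 ≤ d := abs_nonneg c0
  have h2 : -a ≤ c2 := neg_abs_le c2
  have h1 : -b ≤ c1 := neg_abs_le c1
  have h0 : -d ≤ c0 := neg_abs_le c0
  set M : ℝ := 1 + a + b + d with hM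
  have hM1 : (1:ℝ) ≤ M := by linarith
  nlinarith [mul_nonneg (mul_nonneg (by linarith : (0:ℝ) ≤ M) (by linarith : (0:ℝ) ≤ M)) (by linarith : (0:ℝ) ≤ M),
    mul_nonneg hb (mul_nonneg (by linarith : (0:ℝ) ≤ M) (by linarith : (0:ℝ) ≤ M - 1)),
    mul_nonneg hd (by nlinarith : (0:ℝ) ≤ M ^ 2 - 1),
    sq_nonneg M]

/-- If `R0_BZ^out > 1` then `c_0 < 0` and the characteristic cubic
`x³ + c_2x² + c_1x + c_0` has a strictly positive real root: the initial
epidemic growth rate is positive and the disease can invade. -/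
theorem cubic_positive_root_of_R0_gt_one
    (ξ N0 γ δ d_b d_z c σ h_b h_z h_m β β_z Zs : ℝ)
    (hξ : 0 < ξ) (hN0 : 0 < N0) (hγ : 0 < γ) (hδ : 0 < δ)
    (hdb : 0 < d_b) (hdz : 0 < d_z) (hc : 0 < c) (hσ : 0 < σ)
    (hhb : 0 < h_b) (hhz : 0 < h_z) (hhm : 0 < h_m) (hβ : 0 < β)
    (hβz : 0 < β_z) (hZs : 0 < Zs)
    (A c0 c1 c2 : ℝ)
    (hA : A = d_b + c * σ * Zs / h_m)
    (hc2 : c2 = A + γ + δ + d_z)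
    (hc1 : c1 = (A + d_z) * (γ + δ) + A * d_z - N0 * ξ * β / h_b)
    (hc0 : c0 = (γ + δ) * A * d_z - N0 * ξ * β * d_z / h_b -
        N0 * ξ * β_z * σ * Zs / (h_z * h_m))
    (hR : ξ * N0 / ((γ + δ) * A) * (β / h_b + β_z * σ * Zs / (h_z * d_z * h_m)) > 1) :
    c0 < 0 ∧ ∃ x : ℝ, 0 < x ∧ x ^ 3 + c2 * x ^ 2 + c1 * x + c0 = 0 := by
  have hApos : 0 < A := by
    rw [hA]; positivity
  have hc0neg : c0 < 0 := by
    rw [hc0]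
    rw [gt_iff_lt, div_mul_eq_mul_div, lt_div_iff₀ (by positivity)] at hR
    have h1 : ξ * N0 * (β / h_b + β_z * σ * Zs / (h_z * d_z * h_m)) * d_z >
        (γ + δ) * A * d_z := by nlinarith
    have h2 : ξ * N0 * (β / h_b + β_z * σ * Zs / (h_z * d_z * h_m)) * d_z =
        N0 * ξ * β * d_z / h_b + N0 * ξ * β_z * σ * Zs / (h_z * h_m) := by
      field_simp
    linarith [h2 ▸ h1]
  refine ⟨hc0neg, ?_⟩
  have hM1 : (1:ℝ) ≤ 1 + |c2| + |c1| + |c0| := by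
    have := abs_nonneg c2; have := abs_nonneg c1; have := abs_nonneg c0
    linarith
  set M : ℝ := 1 + |c2| + |c1| + |c0| with hM
  have hcont : ContinuousOn (fun x : ℝ => x ^ 3 + c2 * x ^ 2 + c1 * x + c0)
      (Set.Icc 0 M) := by fun_prop
  have hMnn : (0:ℝ) ≤ M := by linarith
  have hfM : 0 < M ^ 3 + c2 * M ^ 2 + c1 * M + c0 := by
    rw [hM]; exact cubic_eval_large c2 c1 c0
  have hf0 : (0:ℝ) ^ 3 + c2 * (0:ℝ) ^ 2 + c1 * 0 + c0 < 0 := by simpa using hc0neg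
  obtain ⟨x, hx, hfx⟩ := intermediate_value_Icc hMnn hcont ⟨le_of_lt hf0, le_of_lt hfM⟩
  refine ⟨x, ?_, hfx⟩
  rcases lt_or_eq_of_le hx.1 with h | h
  · exact h
  · exfalso; subst h
    have h' : (0:ℝ) ^ 3 + c2 * (0:ℝ) ^ 2 + c1 * 0 + c0 = 0 := hfx
    linarith
end

section
/- Let Λ ≥ 0, δ ≥ 0 and μ > 0, and let N, I : ℝ → ℝ with N differentiable on [0, ∞), I(t) ≥ 0 for all t ≥ 0, and N′(t) = Λ − δ I(t) − μ N(t) for all t ≥ 0. If N(0) ≤ Λ/μ, then N(t) ≤ Λ/μ for all t ≥ 0. -/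
open Set Real

/-- Comparison bound for the total human population: if `N` is differentiable
on `[0,∞)` with `N′ = Λ − δI − μN` there, `I ≥ 0` on `[0,∞)`, and
`N(0) ≤ Λ/μ`, then `N(t) ≤ Λ/μ` for all `t ≥ 0`. -/
theorem population_bounded
    (Λ δ μ : ℝ) (hΛ : 0 ≤ Λ) (hδ : 0 ≤ δ) (hμ : 0 < μ)
    (N I : ℝ → ℝ)
    (hI : ∀ t ≥ (0 : ℝ), 0 ≤ I t)
    (hN : ∀ t ∈ Set.Ici (0 : ℝ),
      HasDerivWithinAt N (Λ - δ * I t - μ * N t) (Set.Ici 0) t)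
    (h0 : N 0 ≤ Λ / μ) :
    ∀ t ≥ (0 : ℝ), N t ≤ Λ / μ := by
  intro t ht
  set f : ℝ → ℝ := fun s => N s - Λ / μ with hf_def
  set f' : ℝ → ℝ := fun s => Λ - δ * I s - μ * N s with hf'_def
  have key : ∀ x ∈ Icc (0 : ℝ) t, f x ≤ gronwallBound 0 (-μ) 0 (x - 0) := by
    apply le_gronwallBound_of_liminf_deriv_right_le (f' := f')
    · intro x hx
      exact (((hN x hx.1).sub_const _).mono (fun y hy => hy.1)).continuousWithinAt
    · intro x hx r hr
      have h : HasDerivWithinAt f (f' x) (Ici x) x :=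
        ((hN x hx.1).sub_const _).mono (Ici_subset_Ici.2 hx.1)
      exact h.liminf_right_slope_le hr
    · simp only [hf_def]; linarith
    · intro x hx
      have hIx := hI x hx.1
      have : f' x = -μ * f x - δ * I x := by
        simp only [hf'_def, hf_def]
        field_simp
        ring
      rw [this]
      nlinarith
  have := key t ⟨le_refl 0 |>.trans ht, le_refl t⟩
  rw [sub_zero, gronwallBound_ε0_δ0] at this
  simpa [hf_def] using this
end

section
/- Let ξ, Λ, μ, γ, δ, d_b, d_z, c, σ, h_m, h_b, h_z, β, β_z, Z* be positive reals, set A = d_b + cσZ*/h_m, and consider the 3×3 real matrices F = [[0, βΛ/(h_bμ), β_zΛ/(h_zμ)], [0,0,0], [0,0,0]] and V = [[γ+μ+δ, 0, 0], [−ξ, A, 0], [0, −σZ*/h_m, d_z]]. Then V is invertible with inverse W = [[1/(γ+μ+δ), 0, 0], [ξ/(A(γ+μ+δ)), 1/A, 0], [ξσZ*/(h_m d_z A(γ+μ+δ)), σZ*/(h_m d_z A), 1/d_z]], and the characteristic polynomial of F·V⁻¹ equals X²·(X − R0^l), where R0^l = (ξΛ)/(μ A (δ+γ+μ)) · (β/h_b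 + σZ*β_z/(d_z h_m h_z)). In particular the eigenvalues of the next-generation matrix F·V⁻¹ are R0^l, 0, 0, so its spectral radius is R0^l. -/
set_option maxHeartbeats 1000000 in
open Polynomial in
/-- The transition matrix `V` of the cholera model at the disease-free
equilibrium is invertible with the explicit inverse `W`; the next-generation
matrix `F·V⁻¹` has characteristic polynomial `X²(X − R0^l)`, spectrum
`{0, R0^l}`, and spectral radius `R0^l`. -/
theorem next_generation_matrix_spectral_radius
    (ξ Λ μ γ δ d_b d_z c σ h_m h_b h_z β β_z Zs : ℝ)
    (hξ : 0 < ξ) (hΛ : 0 < Λ) (hμ : 0 < μ) (hγ : 0 < γ) (hδ : 0 < δ)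
    (hdb : 0 < d_b) (hdz : 0 < d_z) (hc : 0 < c) (hσ : 0 < σ)
    (hhm : 0 < h_m) (hhb : 0 < h_b) (hhz : 0 < h_z)
    (hβ : 0 < β) (hβz : 0 < β_z) (hZs : 0 < Zs)
    (A : ℝ) (hA : A = d_b + c * σ * Zs / h_m)
    (F V W : Matrix (Fin 3) (Fin 3) ℝ)
    (hF : F = !![0, β * Λ / (h_b * μ), β_z * Λ / (h_z * μ); 0, 0, 0; 0, 0, 0])
    (hV : V = !![γ + μ + δ, 0, 0; -ξ, A, 0; 0, -(σ * Zs / h_m), d_z])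
    (hW : W = !![1 / (γ + μ + δ), 0, 0;
                 ξ / (A * (γ + μ + δ)), 1 / A, 0;
                 ξ * σ * Zs / (h_m * d_z * A * (γ + μ + δ)),
                   σ * Zs / (h_m * d_z * A), 1 / d_z])
    (R0l : ℝ)
    (hR : R0l = ξ * Λ / (μ * A * (δ + γ + μ)) *
        (β / h_b + σ * Zs * β_z / (d_z * h_m * h_z))) :
    V * W = 1 ∧ W * V = 1 ∧ V⁻¹ = W ∧
    (F * V⁻¹).charpoly = X ^ 2 * (X - C R0l) ∧
    spectrum ℝ (F * V⁻¹) = {0, R0l} ∧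
    IsGreatest ((fun x => |x|) '' spectrum ℝ (F * V⁻¹)) R0l := by
  have hApos : 0 < A := by rw [hA]; positivity
  have hg : 0 < γ + μ + δ := by positivity
  have hAne := hApos.ne'
  have hgne := hg.ne'
  have hVW : V * W = 1 := by
    subst hV hW
    ext i j
    fin_cases i <;> fin_cases j <;>
      simp [Matrix.mul_apply, Fin.sum_univ_three, Matrix.one_apply,
        Matrix.vecHead, Matrix.vecTail] <;>
      field_simp <;> ring
  have hWV : W * V = 1 := by
    subst hV hW
    ext i j
    fin_cases i <;> fin_cases j <;>
      simp [Matrix.mul_apply, Fin.sum_univ_three, Matrix.one_apply,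
        Matrix.vecHead, Matrix.vecTail] <;>
      field_simp <;> ring
  have hVinv : V⁻¹ = W := Matrix.inv_eq_right_inv hVW
  have hR0pos : 0 < R0l := by rw [hR]; positivity
  have ha : β * Λ / (h_b * μ) * (ξ / (A * (γ + μ + δ))) +
      β_z * Λ / (h_z * μ) * (ξ * σ * Zs / (h_m * d_z * A * (γ + μ + δ))) = R0l := by
    rw [hR]; field_simp; ring
  have hM : F * V⁻¹ = !![R0l,
      β * Λ / (h_b * μ) * (1 / A) + β_z * Λ / (h_z * μ) * (σ * Zs / (h_m * d_z * A)),
      β_z * Λ / (h_z * μ) * (1 / d_z); 0, 0, 0; 0, 0, 0] := by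
    rw [hVinv]
    subst hF hW
    ext i j
    fin_cases i <;> fin_cases j <;>
      simp [Matrix.mul_apply, Fin.sum_univ_three, Matrix.vecHead, Matrix.vecTail]
    all_goals (rw [← ha]; try ring)
  have hchar : (F * V⁻¹).charpoly = X ^ 2 * (X - C R0l) := by
    rw [hM, Matrix.charpoly, Matrix.det_fin_three]
    simp [Matrix.charmatrix_apply_eq, Matrix.charmatrix_apply_ne,
      Matrix.vecHead, Matrix.vecTail]
    ring
  have hspec : spectrum ℝ (F * V⁻¹) = {0, R0l} := by
    ext x
    rw [spectrum.mem_iff, Matrix.isUnit_iff_isUnit_det]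
    have hmat : algebraMap ℝ (Matrix (Fin 3) (Fin 3) ℝ) x - F * V⁻¹ =
        !![x - R0l,
          -(β * Λ / (h_b * μ) * (1 / A) + β_z * Λ / (h_z * μ) * (σ * Zs / (h_m * d_z * A))),
          -(β_z * Λ / (h_z * μ) * (1 / d_z)); 0, x, 0; 0, 0, x] := by
      rw [hM]
      ext i j
      fin_cases i <;> fin_cases j <;>
        simp [Matrix.algebraMap_matrix_apply, Matrix.vecHead, Matrix.vecTail]
    have hdet : (!![x - R0l,
          -(β * Λ / (h_b * μ) * (1 / A) + β_z * Λ / (h_z * μ) * (σ * Zs / (h_m * d_z * A))),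
          -(β_z * Λ / (h_z * μ) * (1 / d_z)); 0, x, 0; 0, 0, x]).det
        = (x - R0l) * x * x := by
      rw [Matrix.det_fin_three]
      simp [Matrix.vecHead, Matrix.vecTail]
      try ring
    rw [hmat, hdet]
    simp only [isUnit_iff_ne_zero, not_not, Set.mem_insert_iff, Set.mem_singleton_iff]
    constructor
    · intro h
      rcases mul_eq_zero.mp h with h1 | h2
      · rcases mul_eq_zero.mp h1 with h3 | h4
        · right; linarith
        · left; exact h4
      · left; exact h2
    · rintro (rfl | rfl) <;> ring
  refine ⟨hVW, hWV, hVinv, hchar, hspec, ?_⟩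
  constructor
  · exact ⟨R0l, by rw [hspec]; right; rfl, abs_of_pos hR0pos⟩
  · rintro y ⟨x, hx, rfl⟩
    rw [hspec] at hx
    rcases hx with rfl | rfl
    · simpa using hR0pos.le
    · exact (abs_of_pos hR0pos).le
end
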